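/- arXiv:0806.4448 — 2 statements merged into one kernel-verified Lean document; each statement's English description precedes it below -/
import Mathlib

section
/- Let G_k = (S_k, L_k, H_k), k = 1,…,n, be generalized open oscillator triples with m field channels, where each S_k ∈ ℂ^{m×m} is unitary, L_k is a column vector of m elements of 𝒜, and H_k ∈ 𝒜. For j ≤ k set S_{k↞j} = S_k S_{k−1}⋯S_j, S_{k↞k} = S_k, S_{k↞k+1} = I_m. Then the iterated series product satisfies Gₙ ◁ Gₙ₋₁ ◁ ⋯ ◁ G₁ = ( S_{n↞1}, Σ_{k=1}^{n} S_{n↞k+1} L_k, Σ_{k=1}^{n} H_k + Hₙ^f ), where Hₙ^f = (1/(2i)) Σ_{j=1}^{n−1} Σ_{k=j+1}^{n} ( L_k† S_{k↞j+1} L_j − L_j† S_{k↞j+1}† L_k ). -/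
/-!
Induction on `n`. Since `S_{n+1↞j} = S_{n+1} S_{n↞j}`, the scattering matrix and the coupling
vector telescope. In the Hamiltonian, the new cross term of `G_{n+1} ◁ (G_n ◁ ⋯ ◁ G_0)` is
sesquilinear in the chain's coupling vector `Σ_{j ≤ n} S_{n↞j+1} L_j`, so it splits into the
cross terms of `G_{n+1}` with each `G_j`: exactly the new summands `k = n + 1` of `H^f`.
-/

open Finset Matrix

noncomputable section

variable {A : Type*} [Ring A] [Algebra ℂ A] [StarRing A] [StarModule ℂ A]

/-- Product of a complex matrix with a vector of algebra elements. -/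
def mulVecA {ι κ : Type*} [Fintype κ] (M : Matrix ι κ ℂ) (v : κ → A) : ι → A :=
  fun i => ∑ j, M i j • v j

/-- Quadratic-form-style expression `xᵀ M y` with values in the algebra. -/
def quadA {ι κ : Type*} [Fintype ι] [Fintype κ] (x : ι → A) (M : Matrix ι κ ℂ) (y : κ → A) : A :=
  ∑ i, ∑ j, M i j • (x i * y j)

/-- Sesquilinear expression `L† S L'` with values in the algebra. -/
def sesqA {ι : Type*} [Fintype ι] (L : ι → A) (S : Matrix ι ι ℂ) (L' : ι → A) : A :=
  ∑ i, ∑ j, S i j • (star (L i) * L' j)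

/-- Entrywise complex conjugate `M#`. -/
def conjM {ι κ : Type*} (M : Matrix ι κ ℂ) : Matrix ι κ ℂ := M.map (starRingEnd ℂ)

/-- A generalized open oscillator triple `(S, L, H)` with `m` field channels. -/
structure GOO (A : Type*) [Ring A] (m : ℕ) where
  S : Matrix (Fin m) (Fin m) ℂ
  L : Fin m → A
  H : A

/-- The series product `G₂ ◁ G₁`. -/
def seriesProd {m : ℕ} (G2 G1 : GOO A m) : GOO A m where
  S := G2.S * G1.S
  L := fun i => mulVecA G2.S G1.L i + G2.L i
  H := G1.H + G2.H + (2 * Complex.I)⁻¹ • (sesqA G2.L G2.S G1.L - sesqA G1.L G2.Sᴴ G2.L)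

/-- Iterated series product `G k ◁ ⋯ ◁ G 1 ◁ G 0`. -/
def chainG {m : ℕ} (G : ℕ → GOO A m) : ℕ → GOO A m
  | 0 => G 0
  | k + 1 => seriesProd (G (k + 1)) (chainG G k)

/-- `S_{k ↞ j} = S k * S (k-1) * ⋯ * S j` (equal to `1` when `j = k + 1`). -/
def Sprod {m : ℕ} (S : ℕ → Matrix (Fin m) (Fin m) ℂ) (k j : ℕ) : Matrix (Fin m) (Fin m) ℂ :=
  (((List.range' j (k + 1 - j)).reverse).map S).prod

set_option linter.unusedSectionVars false

lemma mulVecA_one {ι : Type*} [Fintype ι] [DecidableEq ι] (v : ι → A) :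
    mulVecA (1 : Matrix ι ι ℂ) v = v := by
  funext i
  simp [mulVecA, Matrix.one_apply, ite_smul]

lemma mulVecA_mul {ι κ τ : Type*} [Fintype κ] [Fintype τ]
    (M : Matrix ι κ ℂ) (N : Matrix κ τ ℂ) (v : τ → A) :
    mulVecA (M * N) v = mulVecA M (mulVecA N v) := by
  funext i
  simp only [mulVecA, Matrix.mul_apply, Finset.sum_smul, Finset.smul_sum, smul_smul]
  exact Finset.sum_comm

lemma mulVecA_sum {ι κ γ : Type*} [Fintype κ] (M : Matrix ι κ ℂ) (s : Finset γ)
    (f : γ → κ → A) : mulVecA M (∑ k ∈ s, f k) = ∑ k ∈ s, mulVecA M (f k) := by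
  funext i
  simp only [mulVecA, Finset.sum_apply, Finset.smul_sum]
  exact Finset.sum_comm

lemma sesqA_sum_right {ι γ : Type*} [Fintype ι] (x : ι → A) (S : Matrix ι ι ℂ)
    (s : Finset γ) (f : γ → ι → A) :
    sesqA x S (∑ k ∈ s, f k : ι → A) = ∑ k ∈ s, sesqA x S (f k) := by
  simp only [sesqA, Finset.sum_apply, Finset.mul_sum, Finset.smul_sum]
  exact (Finset.sum_congr rfl fun _ _ => Finset.sum_comm).trans Finset.sum_comm

lemma sesqA_sum_left {ι γ : Type*} [Fintype ι] (y : ι → A) (S : Matrix ι ι ℂ)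
    (s : Finset γ) (f : γ → ι → A) :
    sesqA (∑ k ∈ s, f k : ι → A) S y = ∑ k ∈ s, sesqA (f k) S y := by
  simp only [sesqA, Finset.sum_apply, star_sum, Finset.sum_mul, Finset.smul_sum]
  exact (Finset.sum_congr rfl fun _ _ => Finset.sum_comm).trans Finset.sum_comm

lemma sesqA_mulVecA_right {ι : Type*} [Fintype ι] (x : ι → A) (S M : Matrix ι ι ℂ)
    (v : ι → A) : sesqA x S (mulVecA M v) = sesqA x (S * M) v := by
  simp only [sesqA, mulVecA, Finset.mul_sum, mul_smul_comm, Finset.smul_sum, smul_smul,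
    Matrix.mul_apply, Finset.sum_smul]
  exact Finset.sum_congr rfl fun _ _ => Finset.sum_comm

lemma sesqA_mulVecA_left {ι : Type*} [Fintype ι] (y : ι → A) (S M : Matrix ι ι ℂ)
    (v : ι → A) : sesqA (mulVecA M v) S y = sesqA v (Mᴴ * S) y := by
  simp only [sesqA, mulVecA, star_sum, star_smul, Finset.sum_mul, smul_mul_assoc,
    Finset.smul_sum, smul_smul, Matrix.mul_apply, Matrix.conjTranspose_apply, Finset.sum_smul]
  simp only [mul_comm (S _ _)]
  rw [Finset.sum_comm]
  exact (Finset.sum_congr rfl fun _ _ => Finset.sum_comm).trans Finset.sum_comm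

lemma Sprod_succ_self {m : ℕ} (S : ℕ → Matrix (Fin m) (Fin m) ℂ) (k : ℕ) :
    Sprod S k (k + 1) = 1 := by
  simp [Sprod]

lemma Sprod_succ {m : ℕ} (S : ℕ → Matrix (Fin m) (Fin m) ℂ) {k j : ℕ} (h : j ≤ k + 1) :
    Sprod S (k + 1) j = S (k + 1) * Sprod S k j := by
  have hlen : k + 1 + 1 - j = (k + 1 - j) + 1 := by omega
  have hend : j + (k + 1 - j) = k + 1 := by omega
  simp [Sprod, hlen, List.range'_concat, hend]

lemma Finset.sum_range_sum_Icc_succ {M : Type*} [AddCommMonoid M] (f : ℕ → ℕ → M)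
    (n : ℕ) :
    ∑ j ∈ range (n + 1), ∑ k ∈ Icc (j + 1) (n + 1), f k j =
      ∑ j ∈ range n, ∑ k ∈ Icc (j + 1) n, f k j + ∑ j ∈ range (n + 1), f (n + 1) j := by
  rw [Finset.sum_congr rfl fun j hj => Finset.sum_Icc_succ_top (by simp at hj; omega) _,
    Finset.sum_add_distrib, Finset.sum_range_succ _ n]
  simp

namespace GOO

variable {m : ℕ} (G : ℕ → GOO A m)

def crossTerm (k j : ℕ) : A :=
  sesqA (G k).L (Sprod (fun l => (G l).S) k (j + 1)) (G j).L -
    sesqA (G j).L (Sprod (fun l => (G l).S) k (j + 1))ᴴ (G k).L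

lemma chainG_S (n : ℕ) : (chainG G n).S = Sprod (fun k => (G k).S) n 0 := by
  induction n with
  | zero => simp [chainG, Sprod]
  | succ n ih => rw [chainG, seriesProd, ih, Sprod_succ _ (Nat.zero_le _)]

lemma chainG_L (n : ℕ) :
    (chainG G n).L =
      ∑ k ∈ range (n + 1), mulVecA (Sprod (fun l => (G l).S) n (k + 1)) (G k).L := by
  induction n with
  | zero => simp [chainG, Sprod_succ_self, mulVecA_one]
  | succ n ih =>
    have hstep : ∀ k ∈ range (n + 1), mulVecA (G (n + 1)).S
        (mulVecA (Sprod (fun l => (G l).S) n (k + 1)) (G k).L) =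
          mulVecA (Sprod (fun l => (G l).S) (n + 1) (k + 1)) (G k).L := fun k hk => by
      rw [Sprod_succ _ (by simp at hk; omega), mulVecA_mul]
    rw [Finset.sum_range_succ, Sprod_succ_self, mulVecA_one, ← Finset.sum_congr rfl hstep,
      ← mulVecA_sum, ← ih]
    rfl

lemma chainG_succ_crossTerm (n : ℕ) :
    sesqA (G (n + 1)).L (G (n + 1)).S (chainG G n).L -
        sesqA (chainG G n).L (G (n + 1)).Sᴴ (G (n + 1)).L =
      ∑ j ∈ range (n + 1), crossTerm G (n + 1) j := by
  rw [chainG_L, sesqA_sum_right, sesqA_sum_left, ← Finset.sum_sub_distrib]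
  refine Finset.sum_congr rfl fun j hj => ?_
  rw [crossTerm, Sprod_succ _ (by simp at hj; omega), sesqA_mulVecA_right, sesqA_mulVecA_left,
    Matrix.conjTranspose_mul]

lemma chainG_H (n : ℕ) :
    (chainG G n).H = ∑ k ∈ range (n + 1), (G k).H +
      (2 * Complex.I)⁻¹ • ∑ j ∈ range n, ∑ k ∈ Icc (j + 1) n, crossTerm G k j := by
  induction n with
  | zero => simp [chainG]
  | succ n ih =>
    rw [chainG, seriesProd, ih, chainG_succ_crossTerm, Finset.sum_range_sum_Icc_succ,
      Finset.sum_range_succ _ (n + 1), smul_add, add_right_comm _ _ (G (n + 1)).H, add_assoc]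

end GOO

theorem stmt1_general (m n : ℕ) (G : ℕ → GOO A m) :
    chainG G n =
      ⟨Sprod (fun k => (G k).S) n 0,
       fun i => ∑ k ∈ Finset.range (n + 1),
         mulVecA (Sprod (fun l => (G l).S) n (k + 1)) (G k).L i,
       (∑ k ∈ Finset.range (n + 1), (G k).H) +
         (2 * Complex.I)⁻¹ •
           ∑ j ∈ Finset.range n, ∑ k ∈ Finset.Icc (j + 1) n,
             (sesqA (G k).L (Sprod (fun l => (G l).S) k (j + 1)) (G j).L -
              sesqA (G j).L (Sprod (fun l => (G l).S) k (j + 1))ᴴ (G k).L)⟩ := by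
  have hL := GOO.chainG_L G n
  have hH := GOO.chainG_H G n
  rw [Finset.sum_fn] at hL
  unfold GOO.crossTerm at hH
  rw [← GOO.chainG_S, ← hL, ← hH]

/-- The iterated series product of generalized open oscillators
`G n ◁ G (n-1) ◁ ⋯ ◁ G 0`. -/
theorem stmt1 (m n : ℕ) (G : ℕ → GOO A m)
    (hS : ∀ k ≤ n, (G k).S ∈ Matrix.unitaryGroup (Fin m) ℂ)
    (hH : ∀ k ≤ n, IsSelfAdjoint (G k).H) :
    chainG G n =
      ⟨Sprod (fun k => (G k).S) n 0,
       fun i => ∑ k ∈ Finset.range (n + 1),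
         mulVecA (Sprod (fun l => (G l).S) n (k + 1)) (G k).L i,
       (∑ k ∈ Finset.range (n + 1), (G k).H) +
         (2 * Complex.I)⁻¹ •
           ∑ j ∈ Finset.range n, ∑ k ∈ Finset.Icc (j + 1) n,
             (sesqA (G k).L (Sprod (fun l => (G l).S) k (j + 1)) (G j).L -
              sesqA (G j).L (Sprod (fun l => (G l).S) k (j + 1))ᴴ (G k).L)⟩ :=
  stmt1_general m n G
end
end

section
/- Let G₁ = (S₁, K₁x₁, ½x₁ᵀR₁x₁) and G₂ = (S₂, K₂x₂, ½x₂ᵀR₂x₂) be generalized open oscillator triples with m field channels, built on commuting families of self-adjoint canonical operators x₁, x₂, with R₁ ∈ ℝ^{2n₁×2n₁}, R₂ ∈ ℝ^{2n₂×2n₂} real symmetric and S₁, S₂ ∈ ℂ^{m×m} unitary. Then the series product G₂ ◁ G₁ is again a generalized open oscillator triple: its scattering matrix S₂S₁ is unitary, its coupling vector equals [S₂K₁ K₂] x with x = (x₁ᵀ, x₂ᵀ)ᵀ, and its Hamiltonian equals ½ xᵀ R̃ x where R̃ = [[R₁, Cᵀ],[C, R₂]] is real symmetric with C = (1/(2i))(K₂†S₂K₁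 − K₂ᵀS₂#K₁#). -/
open Finset Matrix

noncomputable section

variable {A : Type*} [Ring A] [Algebra ℂ A] [StarRing A] [StarModule ℂ A]

/-!
Substituting `Lₖ = Kₖxₖ` and `xₖ† = xₖ`, the interaction term of the series product becomes
`(1/2i)(x₂ᵀ M x₁ − x₁ᵀ M† x₂)` with `M = K₂†S₂K₁`. Since the components of `x₁` and `x₂` commute,
`x₁ᵀ M† x₂ = x₂ᵀ M# x₁`, so the interaction term is `x₂ᵀ C x₁` with `C = (M − M#)/2i = Im M`
real; splitting it evenly between the two off-diagonal blocks gives `½ xᵀ R̃ x`.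
-/

lemma conjM_mul {ι κ σ : Type*} [Fintype κ] (M : Matrix ι κ ℂ) (N : Matrix κ σ ℂ) :
    conjM (M * N) = conjM M * conjM N := Matrix.map_mul

lemma conjM_transpose {ι κ : Type*} (M : Matrix ι κ ℂ) : (conjM M)ᵀ = Mᴴ := rfl

lemma conjM_conjTranspose {ι κ : Type*} (M : Matrix ι κ ℂ) : conjM Mᴴ = Mᵀ := by
  ext i j
  simp [conjM, conjTranspose_apply]

lemma smul_sub_conjM_eq_map_im {ι κ : Type*} (M : Matrix ι κ ℂ) :
    (2 * Complex.I)⁻¹ • (M - conjM M) = M.map fun z => (z.im : ℂ) := by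
  ext i j
  simp only [Matrix.smul_apply, Matrix.sub_apply, conjM, map_apply, Complex.sub_conj, smul_eq_mul]
  field_simp [Complex.I_ne_zero]
  push_cast
  ring

section AlgebraValued

variable {B : Type*} [Ring B] [Algebra ℂ B] {ι κ σ : Type*}

lemma mulVecA_mulVecA [Fintype κ] [Fintype σ] (M : Matrix ι κ ℂ) (N : Matrix κ σ ℂ)
    (x : σ → B) : mulVecA M (mulVecA N x) = mulVecA (M * N) x := by
  funext i
  simp only [mulVecA, mul_apply, smul_sum, sum_smul, smul_smul]
  exact sum_comm

lemma mulVecA_fromCols [Fintype κ] [Fintype σ] (P : Matrix ι κ ℂ) (Q : Matrix ι σ ℂ)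
    (x : κ → B) (y : σ → B) :
    mulVecA (fromCols P Q) (Sum.elim x y) = mulVecA P x + mulVecA Q y := by
  funext i
  simp [mulVecA, Fintype.sum_sum_type]

lemma star_mulVecA [StarRing B] [StarModule ℂ B] [Fintype κ] (K : Matrix ι κ ℂ) (x : κ → B) :
    (fun i => star (mulVecA K x i)) = mulVecA (conjM K) fun j => star (x j) := by
  funext i
  simp [mulVecA, conjM, star_sum, star_smul]

variable [Fintype ι] [Fintype κ]

lemma quadA_mulVecA_left [Fintype σ] (P : Matrix ι κ ℂ) (x : κ → B) (M : Matrix ι σ ℂ)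
    (y : σ → B) : quadA (mulVecA P x) M y = quadA x (Pᵀ * M) y := by
  simp only [quadA, mulVecA, sum_mul, smul_mul_assoc, smul_sum, smul_smul, mul_apply,
    transpose_apply, sum_smul]
  rw [sum_comm_cycle]
  refine sum_congr rfl fun k _ => sum_comm.trans ?_
  simp only [mul_comm]

lemma quadA_mulVecA_right [Fintype σ] (x : ι → B) (M : Matrix ι κ ℂ) (Q : Matrix κ σ ℂ)
    (y : σ → B) : quadA x M (mulVecA Q y) = quadA x (M * Q) y := by
  simp only [quadA, mulVecA, mul_sum, mul_smul_comm, smul_sum, smul_smul, mul_apply, sum_smul]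
  exact sum_congr rfl fun i _ => sum_comm

lemma quadA_fromBlocks {ι' κ' : Type*} [Fintype ι'] [Fintype κ']
    (x : ι → B) (x' : ι' → B) (y : κ → B) (y' : κ' → B)
    (P : Matrix ι κ ℂ) (Q : Matrix ι κ' ℂ) (R : Matrix ι' κ ℂ) (S : Matrix ι' κ' ℂ) :
    quadA (Sum.elim x x') (fromBlocks P Q R S) (Sum.elim y y') =
      quadA x P y + quadA x Q y' + quadA x' R y + quadA x' S y' := by
  simp only [quadA, Fintype.sum_sum_type, fromBlocks_apply₁₁, fromBlocks_apply₁₂,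
    fromBlocks_apply₂₁, fromBlocks_apply₂₂, Sum.elim_inl, Sum.elim_inr, sum_add_distrib]
  abel

lemma quadA_smul_sub (x : ι → B) (c : ℂ) (M N : Matrix ι κ ℂ) (y : κ → B) :
    quadA x (c • (M - N)) y = c • (quadA x M y - quadA x N y) := by
  simp only [quadA, Matrix.smul_apply, Matrix.sub_apply, smul_eq_mul, mul_smul, sub_smul,
    smul_sub, sum_sub_distrib, smul_sum]

lemma quadA_transpose_of_commute (x : ι → B) (M : Matrix κ ι ℂ) (y : κ → B)
    (hxy : ∀ i j, x i * y j = y j * x i) : quadA x Mᵀ y = quadA y M x := by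
  simp only [quadA, transpose_apply, hxy]
  exact sum_comm

lemma sesqA_mulVecA [StarRing B] [StarModule ℂ B] [Fintype σ] (K : Matrix ι κ ℂ)
    (S : Matrix ι ι ℂ) (K' : Matrix ι σ ℂ) (x : κ → B) (y : σ → B)
    (hx : ∀ j, IsSelfAdjoint (x j)) :
    sesqA (mulVecA K x) S (mulVecA K' y) = quadA x (Kᴴ * S * K') y := by
  change quadA (fun i => star (mulVecA K x i)) S (mulVecA K' y) = _
  simp only [star_mulVecA, fun j => (hx j).star_eq]
  rw [quadA_mulVecA_left, quadA_mulVecA_right, conjM_transpose, Matrix.mul_assoc]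

end AlgebraValued

/-- The series product `G₂ ◁ G₁` of two generalized open oscillator triples is
again a generalized open oscillator triple: unitary scattering matrix `S₂S₁`, coupling vector
`[S₂K₁ K₂] x`, and Hamiltonian `½ xᵀ R̃ x` with `R̃ = [[R₁, Cᵀ],[C, R₂]]` real symmetric, where
`C = (1/2i)(K₂†S₂K₁ − K₂ᵀS₂#K₁#)`. -/
theorem stmt5 (m n1 n2 : ℕ)
    (x1 : Fin (2 * n1) → A) (x2 : Fin (2 * n2) → A)
    (hx1 : ∀ i, IsSelfAdjoint (x1 i)) (hx2 : ∀ i, IsSelfAdjoint (x2 i))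
    (hcomm : ∀ i j, x1 i * x2 j = x2 j * x1 i)
    (S1 S2 : Matrix (Fin m) (Fin m) ℂ)
    (hS1 : S1 ∈ Matrix.unitaryGroup (Fin m) ℂ) (hS2 : S2 ∈ Matrix.unitaryGroup (Fin m) ℂ)
    (K1 : Matrix (Fin m) (Fin (2 * n1)) ℂ) (K2 : Matrix (Fin m) (Fin (2 * n2)) ℂ)
    (R1 : Matrix (Fin (2 * n1)) (Fin (2 * n1)) ℝ) (hR1 : R1ᵀ = R1)
    (R2 : Matrix (Fin (2 * n2)) (Fin (2 * n2)) ℝ) (hR2 : R2ᵀ = R2)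
    (G1 G2 : GOO A m)
    (hG1 : G1 = ⟨S1, mulVecA K1 x1, (2 : ℂ)⁻¹ • quadA x1 (R1.map Complex.ofReal) x1⟩)
    (hG2 : G2 = ⟨S2, mulVecA K2 x2, (2 : ℂ)⁻¹ • quadA x2 (R2.map Complex.ofReal) x2⟩)
    (C : Matrix (Fin (2 * n2)) (Fin (2 * n1)) ℂ)
    (hC : C = (2 * Complex.I)⁻¹ • (K2ᴴ * S2 * K1 - K2ᵀ * conjM S2 * conjM K1)) :
    (seriesProd G2 G1).S ∈ Matrix.unitaryGroup (Fin m) ℂ ∧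
    (seriesProd G2 G1).S = S2 * S1 ∧
    (seriesProd G2 G1).L = mulVecA (Matrix.fromCols (S2 * K1) K2) (Sum.elim x1 x2) ∧
    (∀ i j, (C i j).im = 0) ∧
    (Matrix.fromBlocks (R1.map Complex.ofReal) Cᵀ C (R2.map Complex.ofReal))ᵀ =
      Matrix.fromBlocks (R1.map Complex.ofReal) Cᵀ C (R2.map Complex.ofReal) ∧
    (seriesProd G2 G1).H =
      (2 : ℂ)⁻¹ • quadA (Sum.elim x1 x2)
        (Matrix.fromBlocks (R1.map Complex.ofReal) Cᵀ C (R2.map Complex.ofReal))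
        (Sum.elim x1 x2) := by
  subst hG1 hG2
  set M := K2ᴴ * S2 * K1
  have hconj : K2ᵀ * conjM S2 * conjM K1 = conjM M := by
    rw [conjM_mul, conjM_mul, conjM_conjTranspose]
  have hM_adjoint : K1ᴴ * S2ᴴ * K2 = (conjM M)ᵀ := by
    rw [conjM_transpose, conjTranspose_mul, conjTranspose_mul, conjTranspose_conjTranspose,
      Matrix.mul_assoc]
  rw [hconj] at hC
  refine ⟨mul_mem hS2 hS1, rfl, ?_, ?_, ?_, ?_⟩
  · exact (congrArg (· + mulVecA K2 x2) (mulVecA_mulVecA S2 K1 x1)).trans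
      (mulVecA_fromCols _ _ _ _).symm
  · intro i j
    rw [hC, smul_sub_conjM_eq_map_im, map_apply, Complex.ofReal_im]
  · exact (IsSymm.fromBlocks (IsSymm.map hR1 _) (transpose_transpose C) (IsSymm.map hR2 _)).eq
  · have hcross : (2 * Complex.I)⁻¹ • (sesqA (mulVecA K2 x2) S2 (mulVecA K1 x1) -
        sesqA (mulVecA K1 x1) S2ᴴ (mulVecA K2 x2)) = quadA x2 C x1 := by
      rw [sesqA_mulVecA _ _ _ _ _ hx2, sesqA_mulVecA _ _ _ _ _ hx1, hM_adjoint,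
        quadA_transpose_of_commute _ _ _ hcomm, hC, quadA_smul_sub]
    change (2 : ℂ)⁻¹ • quadA x1 _ x1 + (2 : ℂ)⁻¹ • quadA x2 _ x2 + _ = _
    rw [hcross, quadA_fromBlocks, quadA_transpose_of_commute _ _ _ hcomm]
    module
end
end
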